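/- Let I ⊆ ℝ be an open interval, ξ : ℝ → ℝ, and W, D : ℝ → ℂ be functions such that for every t ∈ I: Im(W t) > 0, D t ≠ 0, W has derivative 2/(W t − ξ t) at t, and D has derivative −2·D t/(W t − ξ t)² at t. Define S(t) := (1/2π)·( log(2·Im(W t)) − log|D t| ) and P(t) := −(1/π)·Im(1/(W t − ξ t)). Then for every t ∈ I, the function S has derivative −2π·(P(t))² at t. -/

import Mathlib

/-!
With `z = W t - ξ t`, the Loewner equations give the logarithmic derivatives
`(log Im W)' = Im(2/z) / Im z` and `(log |D|)' = Re(-2/z²)`. Their difference is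
`2 (Im(1/z) / Im z + Re(1/z²)) = -4 Im(1/z)²`, a pointwise identity of complex numbers,
and `-4 Im(1/z)² / 2π = -2π P²`.
-/

/-- Regularized Green function on the diagonal (log of the conformal radius) in the
half-plane chart: `S(t) = (1/2π)·(log(2·Im(W t)) - log|D t|)`, where `D t = g_t'(w)`. -/
noncomputable def CradT (W D : ℝ → ℂ) (t : ℝ) : ℝ :=
  (1 / (2 * Real.pi)) * (Real.log (2 * (W t).im) - Real.log ‖D t‖)

/-- Poisson kernel at the tip in the half-plane chart:
`P(t) = -(1/π)·Im(1/(W t - ξ t))`. -/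
noncomputable def PoisT (ξ : ℝ → ℝ) (W : ℝ → ℂ) (t : ℝ) : ℝ :=
  -(1 / Real.pi) * ((W t - (ξ t : ℂ))⁻¹).im

open Complex

theorem HasDerivAt.complex_im {f : ℝ → ℂ} {f' : ℂ} {t : ℝ} (hf : HasDerivAt f f' t) :
    HasDerivAt (fun s => (f s).im) f'.im t :=
  imCLM.hasFDerivAt.comp_hasDerivAt t hf

theorem HasDerivAt.log_norm {f : ℝ → ℂ} {f' : ℂ} {t : ℝ} (hf : HasDerivAt f f' t)
    (h₀ : f t ≠ 0) : HasDerivAt (fun s => Real.log ‖f s‖) (f' / f t).re t := by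
  have hsq : (fun s => Real.log ‖f s‖) = fun s => Real.log (‖f s‖ ^ 2) / 2 := by
    funext s
    rw [Real.log_pow]
    ring
  rw [hsq]
  refine ((hf.norm_sq.log (by positivity)).div_const 2).congr_deriv ?_
  rw [Complex.inner, div_re, ← normSq_eq_norm_sq]
  simp only [mul_re, conj_re, conj_im]
  field_simp
  ring

theorem im_inv_div_im_add_re_inv_sq {z : ℂ} (hz : z.im ≠ 0) :
    (z⁻¹).im / z.im + (z⁻¹ ^ 2).re = -2 * (z⁻¹).im ^ 2 := by
  have hn : normSq z ≠ 0 := (normSq_pos.2 fun h => hz (by simp [h])).ne'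
  simp only [inv_im, inv_re, sq, mul_re]
  field_simp
  rw [normSq_apply]
  ring

theorem hasDerivAt_cradT {ξ : ℝ → ℝ} {W D : ℝ → ℂ} {t : ℝ} (hW : 0 < (W t).im)
    (hD : D t ≠ 0) (hW' : HasDerivAt W (2 / (W t - (ξ t : ℂ))) t)
    (hD' : HasDerivAt D (-2 * D t / (W t - (ξ t : ℂ)) ^ 2) t) :
    HasDerivAt (CradT W D) (-(2 * Real.pi) * (PoisT ξ W t) ^ 2) t := by
  set z : ℂ := W t - ξ t with hz_def
  have hz : z.im = (W t).im := by simp [z]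
  have hlog_im : HasDerivAt (fun s => Real.log (2 * (W s).im)) (2 * (z⁻¹.im / z.im)) t := by
    refine ((hW'.complex_im.const_mul 2).log (by linarith)).congr_deriv ?_
    rw [hz, div_eq_mul_inv (2 : ℂ), mul_im]
    norm_num
    ring
  have hlog_norm : HasDerivAt (fun s => Real.log ‖D s‖) (-2 * (z⁻¹ ^ 2).re) t := by
    refine (hD'.log_norm hD).congr_deriv ?_
    rw [show -2 * D t / z ^ 2 / D t = -2 * z⁻¹ ^ 2 by field_simp, mul_re]
    norm_num
  refine ((hlog_im.sub hlog_norm).const_mul (1 / (2 * Real.pi))).congr_deriv ?_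
  rw [PoisT, ← hz_def]
  calc _ = (z⁻¹.im / z.im + (z⁻¹ ^ 2).re) / Real.pi := by ring
    _ = -2 * z⁻¹.im ^ 2 / Real.pi := by rw [im_inv_div_im_add_re_inv_sq (by linarith)]
    _ = _ := by field_simp

theorem statement14_general (I : Set ℝ)
    (ξ : ℝ → ℝ) (W D : ℝ → ℂ)
    (hW : ∀ t ∈ I, 0 < (W t).im) (hD : ∀ t ∈ I, D t ≠ 0)
    (hW' : ∀ t ∈ I, HasDerivAt W (2 / (W t - (ξ t : ℂ))) t)
    (hD' : ∀ t ∈ I, HasDerivAt D (-2 * D t / (W t - (ξ t : ℂ)) ^ 2) t) :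
    ∀ t ∈ I, HasDerivAt (CradT W D) (-(2 * Real.pi) * (PoisT ξ W t) ^ 2) t :=
  fun t ht => hasDerivAt_cradT (hW t ht) (hD t ht) (hW' t ht) (hD' t ht)

/-- **on-diagonal Hadamard formula.** Let `I ⊆ ℝ` be an open interval,
`ξ : ℝ → ℝ`, and `W, D : ℝ → ℂ` be such that for every `t ∈ I`: `Im(W t) > 0`,
`D t ≠ 0`, `W' t = 2/(W t - ξ t)` and `D' t = -2·D t/(W t - ξ t)²`. Then for every
`t ∈ I` the function `S(t) = (1/2π)·(log(2·Im(W t)) - log|D t|)` has derivative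
`-2π·(P(t))²` at `t`. -/
theorem statement14 (I : Set ℝ) (hIopen : IsOpen I) (hIconn : I.OrdConnected)
    (ξ : ℝ → ℝ) (W D : ℝ → ℂ)
    (hW : ∀ t ∈ I, 0 < (W t).im) (hD : ∀ t ∈ I, D t ≠ 0)
    (hW' : ∀ t ∈ I, HasDerivAt W (2 / (W t - (ξ t : ℂ))) t)
    (hD' : ∀ t ∈ I, HasDerivAt D (-2 * D t / (W t - (ξ t : ℂ)) ^ 2) t) :
    ∀ t ∈ I, HasDerivAt (CradT W D) (-(2 * Real.pi) * (PoisT ξ W t) ^ 2) t :=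
  statement14_general I ξ W D hW hD hW' hD'
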